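/- Let G and H be finite simple connected non-complete graphs and consider the corona product G ∘ H. Let g_i, g_j ∈ V(G) and h_k ∈ V(H), and let S = SWT_G(g_i,g_j). If g_i = g_j, then WT_{G∘H}(g_i,(g_j,h_k)) = { g_i, (g_i,h_k) }. If g_i ≠ g_j, then WT_{G∘H}(g_i,(g_j,h_k)) = { g_i, g_j } ∪ { (g_j,y) : y ∈ V(H), y h_k ∉ E(H), y ≠ h_k } ∪ { (g_j,h_k) } ∪ ⋃_{x ∈ S \ {g_i,g_j}} ( {x} ∪ ({x} × V(H)) ) (vertices of G are regarded as vertices of G ∘ H via the inclusion of V(G) into V(G ∘ H)). -/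

import Mathlib

open SimpleGraph

/-- A walk `w : u → v` is a *weakly toll walk* if every vertex of the walk adjacent to `u`
equals the second vertex of the walk, and every vertex of the walk adjacent to `v` equals the
second-to-last vertex of the walk. -/
def IsWeaklyTollWalk {V : Type*} (G : SimpleGraph V) {u v : V} (w : G.Walk u v) : Prop :=
  (∀ i ≤ w.length, G.Adj u (w.getVert i) → w.getVert i = w.getVert 1) ∧
  (∀ i ≤ w.length, G.Adj (w.getVert i) v → w.getVert i = w.getVert (w.length - 1))

/-- The weakly toll interval `WT_G(u,v)`: all vertices lying on some weakly toll walk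
between `u` and `v`. -/
def wtInterval {V : Type*} (G : SimpleGraph V) (u v : V) : Set V :=
  {x | ∃ w : G.Walk u v, IsWeaklyTollWalk G w ∧ x ∈ w.support}

/-- `WT(S)`: the union of the weakly toll intervals between pairs of vertices of `S`. -/
def wtClosure {V : Type*} (G : SimpleGraph V) (S : Set V) : Set V :=
  ⋃ u ∈ S, ⋃ v ∈ S, wtInterval G u v

/-- `S` is a weakly toll set if the weakly toll intervals between its members cover `V(G)`. -/
def IsWeaklyTollSet {V : Type*} (G : SimpleGraph V) (S : Set V) : Prop :=
  wtClosure G S = Set.univ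

/-- The weakly toll number: the minimum cardinality of a weakly toll set. -/
noncomputable def wtn {V : Type*} (G : SimpleGraph V) : ℕ :=
  sInf {n | ∃ S : Set V, IsWeaklyTollSet G S ∧ S.ncard = n}

/-- The weakly toll convex hull of `S`: the union of the iterates `WT^k(S)`. -/
def wtHull {V : Type*} (G : SimpleGraph V) (S : Set V) : Set V :=
  ⋃ k : ℕ, (wtClosure G)^[k] S

/-- `S` is a weakly toll hull set if its weakly toll convex hull is all of `V(G)`. -/
def IsWeaklyTollHullSet {V : Type*} (G : SimpleGraph V) (S : Set V) : Prop :=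
  wtHull G S = Set.univ

/-- The weakly toll hull number: the minimum cardinality of a weakly toll hull set. -/
noncomputable def wth {V : Type*} (G : SimpleGraph V) : ℕ :=
  sInf {n | ∃ S : Set V, IsWeaklyTollHullSet G S ∧ S.ncard = n}

/-- A walk `w : u → v` is a *semi weakly toll walk* if every vertex of the walk adjacent to `u`
equals the second vertex of the walk (no condition at `v`). -/
def IsSemiWeaklyTollWalk {V : Type*} (G : SimpleGraph V) {u v : V} (w : G.Walk u v) : Prop :=
  ∀ i ≤ w.length, G.Adj u (w.getVert i) → w.getVert i = w.getVert 1

/-- The semi weakly toll interval `SWT_G(u,v)`. -/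
def swtInterval {V : Type*} (G : SimpleGraph V) (u v : V) : Set V :=
  {x | ∃ w : G.Walk u v, IsSemiWeaklyTollWalk G w ∧ x ∈ w.support}

/-- The strong product of two simple graphs. -/
def strongProd {V W : Type*} (G : SimpleGraph V) (H : SimpleGraph W) :
    SimpleGraph (V × W) where
  Adj p q := (G.Adj p.1 q.1 ∧ p.2 = q.2) ∨ (p.1 = q.1 ∧ H.Adj p.2 q.2) ∨
    (G.Adj p.1 q.1 ∧ H.Adj p.2 q.2)
  symm := by
    constructor; rintro p q (⟨h1, h2⟩ | ⟨h1, h2⟩ | ⟨h1, h2⟩)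
    · exact Or.inl ⟨h1.symm, h2.symm⟩
    · exact Or.inr (Or.inl ⟨h1.symm, h2.symm⟩)
    · exact Or.inr (Or.inr ⟨h1.symm, h2.symm⟩)
  loopless := by
    constructor; rintro p (⟨h, -⟩ | ⟨-, h⟩ | ⟨h, -⟩)
    · exact G.irrefl h
    · exact H.irrefl h
    · exact G.irrefl h

/-- The lexicographic product of two simple graphs. -/
def lexProd {V W : Type*} (G : SimpleGraph V) (H : SimpleGraph W) :
    SimpleGraph (V × W) where
  Adj p q := G.Adj p.1 q.1 ∨ (p.1 = q.1 ∧ H.Adj p.2 q.2)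
  symm := by
    constructor; rintro p q (h | ⟨h1, h2⟩)
    · exact Or.inl h.symm
    · exact Or.inr ⟨h1.symm, h2.symm⟩
  loopless := by
    constructor; rintro p (h | ⟨-, h⟩)
    · exact G.irrefl h
    · exact H.irrefl h

/-- The adjacency relation of the corona product `G ∘ H`. -/
def coronaAdj {V W : Type*} (G : SimpleGraph V) (H : SimpleGraph W) :
    V ⊕ V × W → V ⊕ V × W → Prop
  | Sum.inl g, Sum.inl g' => G.Adj g g'
  | Sum.inl g, Sum.inr p => g = p.1
  | Sum.inr p, Sum.inl g => p.1 = g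
  | Sum.inr p, Sum.inr q => p.1 = q.1 ∧ H.Adj p.2 q.2

/-- The corona product `G ∘ H`: one copy of `G` and a copy of `H` for each vertex `g` of `G`,
with `g` joined to every vertex of its copy of `H`. -/
def corona {V W : Type*} (G : SimpleGraph V) (H : SimpleGraph W) :
    SimpleGraph (V ⊕ V × W) where
  Adj := coronaAdj G H
  symm := by
    constructor; rintro (g | p) (g' | q) h <;> simp only [coronaAdj] at h ⊢
    · exact h.symm
    · exact h.symm
    · exact h.symm
    · exact ⟨h.1.symm, h.2.symm⟩
  loopless := by
    constructor; rintro (g | p) h <;> simp only [coronaAdj] at h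
    · exact G.irrefl h
    · exact H.irrefl h.2

/- ### auxiliary lemmas -/

lemma isWTW_iff {V : Type*} (G : SimpleGraph V) {u v : V} (w : G.Walk u v) :
    IsWeaklyTollWalk G w ↔
      (∀ z ∈ w.support, G.Adj u z → z = w.getVert 1) ∧
      (∀ z ∈ w.support, G.Adj z v → z = w.getVert (w.length - 1)) := by
  constructor
  · rintro ⟨h1, h2⟩
    refine ⟨fun z hz ha => ?_, fun z hz ha => ?_⟩ <;>
      obtain ⟨n, hn, hnl⟩ := SimpleGraph.Walk.mem_support_iff_exists_getVert.mp hz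
    · subst hn; exact h1 n hnl ha
    · subst hn; exact h2 n hnl ha
  · rintro ⟨h1, h2⟩
    refine ⟨fun i hi ha => ?_, fun i hi ha => ?_⟩
    · exact h1 _ (SimpleGraph.Walk.mem_support_iff_exists_getVert.mpr ⟨i, rfl, hi⟩) ha
    · exact h2 _ (SimpleGraph.Walk.mem_support_iff_exists_getVert.mpr ⟨i, rfl, hi⟩) ha

lemma isSWT_iff {V : Type*} (G : SimpleGraph V) {u v : V} (w : G.Walk u v) :
    IsSemiWeaklyTollWalk G w ↔ (∀ z ∈ w.support, G.Adj u z → z = w.getVert 1) := by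
  constructor
  · intro h1 z hz ha
    obtain ⟨n, hn, hnl⟩ := SimpleGraph.Walk.mem_support_iff_exists_getVert.mp hz
    subst hn; exact h1 n hnl ha
  · intro h1 i hi ha
    exact h1 _ (SimpleGraph.Walk.mem_support_iff_exists_getVert.mpr ⟨i, rfl, hi⟩) ha

lemma getVert_append_left {V : Type*} {G : SimpleGraph V} {u v w : V} (p : G.Walk u v)
    (q : G.Walk v w) {i : ℕ} (hi : i ≤ p.length) :
    (p.append q).getVert i = p.getVert i := by
  rw [Walk.getVert_append]
  split_ifs with h
  · rfl
  · have : i = p.length := le_antisymm hi (not_lt.mp h)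
    subst this
    simp [Walk.getVert_length]

lemma getVert_append_sub_one {V : Type*} {G : SimpleGraph V} {u v w : V} (p : G.Walk u v)
    (q : G.Walk v w) (hq : 1 ≤ q.length) :
    (p.append q).getVert ((p.append q).length - 1) = q.getVert (q.length - 1) := by
  rw [Walk.getVert_append, Walk.length_append]
  have h1 : ¬ (p.length + q.length - 1 < p.length) := by omega
  rw [if_neg h1]
  congr 1
  omega

lemma exists_swt_walk {V : Type*} {G : SimpleGraph V} (hGc : G.Connected) (gi gj : V) :
    ∃ Q : G.Walk gi gj, IsSemiWeaklyTollWalk G Q := by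
  classical
  obtain ⟨p, hp⟩ := (hGc gi gj).exists_walk_length_eq_dist
  refine ⟨p, (isSWT_iff G p).mpr ?_⟩
  intro z hz ha
  have hspec : (p.takeUntil z hz).append (p.dropUntil z hz) = p := p.take_spec hz
  have hq : G.dist gi gj ≤ (Walk.cons ha (p.dropUntil z hz)).length := SimpleGraph.dist_le _
  have hlen : (p.takeUntil z hz).length + (p.dropUntil z hz).length = p.length := by
    rw [← Walk.length_append, hspec]
  rw [Walk.length_cons, ← hp] at hq
  have ht0 : (p.takeUntil z hz).length ≠ 0 := by
    intro h0
    exact ha.ne (Walk.eq_of_length_eq_zero h0)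
  have ht1 : (p.takeUntil z hz).length = 1 := by omega
  have : (p.takeUntil z hz).getVert 1 = z := by
    rw [← ht1]; exact Walk.getVert_length _
  conv_rhs => rw [← hspec]
  rw [getVert_append_left _ _ (by omega)]
  exact this.symm

namespace WTCorona
variable {V W : Type*} (G : SimpleGraph V) (H : SimpleGraph W)

@[reducible] def ι : G →g corona G H := ⟨Sum.inl, fun {_ _} h => h⟩

lemma getVert_map_hom {V' : Type*} {G' : SimpleGraph V'} (f : G →g G') {u v : V}
    (p : G.Walk u v) (i : ℕ) : (p.map f).getVert i = f (p.getVert i) := by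
  induction p generalizing i with
  | nil => simp [Walk.getVert]
  | cons h p ih =>
    cases i with
    | zero => simp
    | succ n => simp [Walk.getVert_cons_succ, ih]

lemma corona_adj_proj {a b : V ⊕ V × W} (h : (corona G H).Adj a b) :
    Sum.elim id Prod.fst a = Sum.elim id Prod.fst b ∨
      G.Adj (Sum.elim id Prod.fst a) (Sum.elim id Prod.fst b) := by
  rcases a with g | p <;> rcases b with g' | q
  · exact Or.inr h
  · exact Or.inl h
  · exact Or.inl h
  · exact Or.inl h.1

noncomputable def projWalk : ∀ {a b : V ⊕ V × W}, (corona G H).Walk a b →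
    G.Walk (Sum.elim id Prod.fst a) (Sum.elim id Prod.fst b)
  | _, _, Walk.nil => Walk.nil
  | _, _, Walk.cons (v := c) h p =>
    @dite _ (Sum.elim id Prod.fst _ = Sum.elim id Prod.fst c) (Classical.dec _)
      (fun heq => (projWalk p).copy heq.symm rfl)
      (fun heq => Walk.cons ((corona_adj_proj G H h).resolve_left heq) (projWalk p))

lemma projWalk_cons {a c b : V ⊕ V × W} (h : (corona G H).Adj a c) (p : (corona G H).Walk c b) :
    projWalk G H (Walk.cons h p) =
    @dite _ (Sum.elim id Prod.fst a = Sum.elim id Prod.fst c) (Classical.dec _)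
      (fun heq => (projWalk G H p).copy heq.symm rfl)
      (fun heq => Walk.cons ((corona_adj_proj G H h).resolve_left heq) (projWalk G H p)) := rfl

lemma mem_projWalk_support {a b : V ⊕ V × W} (w : (corona G H).Walk a b) :
    ∀ z ∈ w.support, Sum.elim id Prod.fst z ∈ (projWalk G H w).support := by
  induction w with
  | nil => intro z hz; simp only [Walk.support_nil, List.mem_singleton] at hz; subst hz
           simp [projWalk]
  | @cons a c b h p ih =>
    intro z hz
    rw [Walk.support_cons, List.mem_cons] at hz
    rw [projWalk_cons]
    split_ifs with heq
    · rw [Walk.support_copy]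
      rcases hz with rfl | hz
      · rw [heq]; exact (projWalk G H p).start_mem_support
      · exact ih z hz
    · rw [Walk.support_cons, List.mem_cons]
      rcases hz with rfl | hz
      · exact Or.inl rfl
      · exact Or.inr (ih z hz)

lemma projWalk_support_subset {a b : V ⊕ V × W} (w : (corona G H).Walk a b) :
    ∀ y ∈ (projWalk G H w).support, ∃ z ∈ w.support, Sum.elim id Prod.fst z = y := by
  induction w with
  | nil => intro y hy; simp only [projWalk, Walk.support_nil, List.mem_singleton] at hy
           exact ⟨_, by simp, hy.symm⟩
  | @cons a c b h p ih =>
    intro y hy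
    rw [projWalk_cons] at hy
    split_ifs at hy with heq
    · rw [Walk.support_copy] at hy
      obtain ⟨z, hz, hzy⟩ := ih y hy
      exact ⟨z, by simp [hz], hzy⟩
    · rw [Walk.support_cons, List.mem_cons] at hy
      rcases hy with rfl | hy
      · exact ⟨a, by simp, rfl⟩
      · obtain ⟨z, hz, hzy⟩ := ih y hy
        exact ⟨z, by simp [hz], hzy⟩

lemma projWalk_getVert_one {a b : V ⊕ V × W} (w : (corona G H).Walk a b)
    (h1 : 0 < w.length)
    (hne : Sum.elim id Prod.fst a ≠ Sum.elim id Prod.fst (w.getVert 1)) :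
    (projWalk G H w).getVert 1 = Sum.elim id Prod.fst (w.getVert 1) := by
  cases w with
  | nil => simp at h1
  | @cons a c b h p =>
    have hv1 : (Walk.cons h p).getVert 1 = c := by
      rw [Walk.getVert_cons_succ, Walk.getVert_zero]
    rw [hv1] at hne ⊢
    rw [projWalk_cons, dif_neg hne, Walk.getVert_cons_succ, Walk.getVert_zero]

lemma mem_inl_of_mem_inr {a b : V ⊕ V × W} (w : (corona G H).Walk a b) {x : V} {h : W}
    (hm : Sum.inr (x, h) ∈ w.support) :
    Sum.inl x ∈ w.support ∨ ∃ h0 : W, a = Sum.inr (x, h0) := by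
  induction w with
  | nil =>
    simp only [Walk.support_nil, List.mem_singleton] at hm
    exact Or.inr ⟨h, hm.symm⟩
  | @cons a c b hadj p ih =>
    rw [Walk.support_cons, List.mem_cons] at hm
    rcases hm with hm | hm
    · exact Or.inr ⟨h, hm.symm⟩
    · rcases ih hm with hx | ⟨h0, rfl⟩
      · exact Or.inl (by simp [Walk.support_cons, hx])
      · rcases a with g | q
        · have : g = x := hadj
          subst this
          exact Or.inl (Walk.start_mem_support _)
        · have h1 : q.1 = x := (show q.1 = (x, h0).1 ∧ H.Adj q.2 (x, h0).2 from hadj).1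
          exact Or.inr ⟨q.2, by rw [← h1]⟩


lemma wtw_lift {gi gj : V} (hk : W) (hij : gi ≠ gj) (Q : G.Walk gi gj)
    (hQ : IsSemiWeaklyTollWalk G Q)
    (T : (corona G H).Walk (Sum.inl gj) (Sum.inr (gj, hk)))
    (hT1 : 1 ≤ T.length)
    (hTend : T.getVert (T.length - 1) = Sum.inl gj)
    (hTsup : ∀ z ∈ T.support, z = Sum.inr (gj, hk) ∨ z = Sum.inl gj ∨
      ∃ y : W, z = Sum.inr (gj, y) ∧ ¬ H.Adj y hk) :
    IsWeaklyTollWalk (corona G H) ((Q.map (ι G H)).append T) := by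
  have hQ' := (isSWT_iff G Q).mp hQ
  have hQlen : 1 ≤ Q.length := by
    rcases Nat.eq_zero_or_pos Q.length with h0 | h0
    · exact absurd (Walk.eq_of_length_eq_zero h0) hij
    · exact h0
  have hmlen : (Q.map (ι G H)).length = Q.length := by simp
  have hv1 : ((Q.map (ι G H)).append T).getVert 1 = Sum.inl (Q.getVert 1) := by
    rw [getVert_append_left _ _ (by omega), getVert_map_hom]; rfl
  have hvend : ((Q.map (ι G H)).append T).getVert (((Q.map (ι G H)).append T).length - 1)
      = Sum.inl gj := by
    rw [getVert_append_sub_one _ _ hT1, hTend]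
  rw [isWTW_iff]
  constructor
  · intro z hz hadj
    rw [hv1]
    rw [Walk.mem_support_append_iff] at hz
    rcases hz with hz | hz
    · rw [Walk.support_map, List.mem_map] at hz
      obtain ⟨g, hg, rfl⟩ := hz
      have hgadj : G.Adj gi g := hadj
      rw [hQ' g hg hgadj]; rfl
    · rcases hTsup z hz with rfl | rfl | ⟨y, rfl, hy⟩
      · exact absurd hadj hij
      · have hgadj : G.Adj gi gj := hadj
        exact congrArg Sum.inl (hQ' gj Q.end_mem_support hgadj)
      · exact absurd hadj hij
  · intro z hz hadj
    rw [hvend]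
    rw [Walk.mem_support_append_iff] at hz
    rcases hz with hz | hz
    · rw [Walk.support_map, List.mem_map] at hz
      obtain ⟨g, hg, rfl⟩ := hz
      have : g = gj := hadj
      rw [this]; rfl
    · rcases hTsup z hz with rfl | rfl | ⟨y, rfl, hy⟩
      · exact absurd hadj ((corona G H).irrefl)
      · rfl
      · exact absurd hadj.2 hy

lemma wtw_detour {gi gj : V} (hk : W) (hij : gi ≠ gj) (Q : G.Walk gi gj)
    (hQ : IsSemiWeaklyTollWalk G Q) {x : V} (hxQ : x ∈ Q.support)
    (hxi : x ≠ gi) (hxj : x ≠ gj) (h : W) :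
    ∃ w : (corona G H).Walk (Sum.inl gi) (Sum.inr (gj, hk)),
      IsWeaklyTollWalk (corona G H) w ∧ Sum.inr (x, h) ∈ w.support := by
  classical
  have hQ' := (isSWT_iff G Q).mp hQ
  have hspec : (Q.takeUntil x hxQ).append (Q.dropUntil x hxQ) = Q := Q.take_spec hxQ
  set Q1 := Q.takeUntil x hxQ with hQ1def
  set Q2 := Q.dropUntil x hxQ with hQ2def
  set R2 : (corona G H).Walk (Sum.inl x) (Sum.inr (gj, hk)) :=
    (Q2.map (ι G H)).append
      (Walk.cons (show (corona G H).Adj (Sum.inl gj) (Sum.inr (gj, hk)) from rfl) Walk.nil)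
    with hR2def
  set R : (corona G H).Walk (Sum.inl x) (Sum.inr (gj, hk)) :=
    Walk.cons (show (corona G H).Adj (Sum.inl x) (Sum.inr (x, h)) from rfl)
      (Walk.cons (show (corona G H).Adj (Sum.inr (x, h)) (Sum.inl x) from rfl) R2) with hRdef
  refine ⟨(Q1.map (ι G H)).append R, ?_, ?_⟩
  swap
  · rw [Walk.mem_support_append_iff]; right; rw [hRdef]; simp
  have hQ1len : 1 ≤ Q1.length := by
    rcases Nat.eq_zero_or_pos Q1.length with h0 | h0
    · exact absurd (Walk.eq_of_length_eq_zero h0).symm hxi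
    · exact h0
  have hQg1 : Q1.getVert 1 = Q.getVert 1 := by
    conv_rhs => rw [← hspec]
    exact (getVert_append_left _ _ hQ1len).symm
  have hR2len : R2.length = Q2.length + 1 := by
    rw [hR2def]; simp [Walk.length_append, Walk.length_map]
  have hRlen : R.length = R2.length + 2 := by
    rw [hRdef]; simp [Walk.length_cons]
  have hRend : R.getVert (R.length - 1) = Sum.inl gj := by
    have h2 : R2.getVert (R2.length - 1) = Sum.inl gj := by
      rw [hR2def, getVert_append_sub_one _ _ (by simp)]
      rfl
    have h1 : R.getVert ((R2.length - 1) + 1 + 1) = R2.getVert (R2.length - 1) := by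
      rw [hRdef, Walk.getVert_cons_succ, Walk.getVert_cons_succ]
    have h3 : R.length - 1 = (R2.length - 1) + 1 + 1 := by omega
    rw [h3, h1, h2]
  have hv1 : ((Q1.map (ι G H)).append R).getVert 1 = Sum.inl (Q.getVert 1) := by
    rw [getVert_append_left _ _ (by simpa using hQ1len), getVert_map_hom, hQg1]; rfl
  have hvend : ((Q1.map (ι G H)).append R).getVert
      (((Q1.map (ι G H)).append R).length - 1) = Sum.inl gj := by
    rw [getVert_append_sub_one _ _ (by omega), hRend]
  have hsup : ∀ z ∈ ((Q1.map (ι G H)).append R).support,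
      (∃ g ∈ Q.support, z = Sum.inl g) ∨ z = Sum.inr (x, h) ∨ z = Sum.inr (gj, hk) := by
    intro z hz
    rw [Walk.mem_support_append_iff] at hz
    rcases hz with hz | hz
    · rw [Walk.support_map, List.mem_map] at hz
      obtain ⟨g, hg, rfl⟩ := hz
      exact Or.inl ⟨g, Q.support_takeUntil_subset hxQ hg, rfl⟩
    · rw [hRdef, Walk.support_cons, Walk.support_cons, List.mem_cons, List.mem_cons] at hz
      rcases hz with rfl | rfl | hz
      · exact Or.inl ⟨x, hxQ, rfl⟩
      · exact Or.inr (Or.inl rfl)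
      · rw [hR2def, Walk.mem_support_append_iff] at hz
        rcases hz with hz | hz
        · rw [Walk.support_map, List.mem_map] at hz
          obtain ⟨g, hg, rfl⟩ := hz
          exact Or.inl ⟨g, Q.support_dropUntil_subset hxQ hg, rfl⟩
        · rw [Walk.support_cons, Walk.support_nil, List.mem_cons, List.mem_singleton] at hz
          rcases hz with rfl | rfl
          · exact Or.inl ⟨gj, Q.end_mem_support, rfl⟩
          · exact Or.inr (Or.inr rfl)
  rw [isWTW_iff]
  constructor
  · intro z hz hadj
    rw [hv1]
    rcases hsup z hz with ⟨g, hg, rfl⟩ | rfl | rfl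
    · have hgadj : G.Adj gi g := hadj
      exact congrArg Sum.inl (hQ' g hg hgadj)
    · exact absurd (show gi = x from hadj) (Ne.symm hxi)
    · exact absurd (show gi = gj from hadj) hij
  · intro z hz hadj
    rw [hvend]
    rcases hsup z hz with ⟨g, hg, rfl⟩ | rfl | rfl
    · exact congrArg Sum.inl (show g = gj from hadj)
    · exact absurd (show x = gj from hadj.1) hxj
    · exact absurd hadj ((corona G H).irrefl)


lemma not_mem_inr_start {gi gj : V} {hk : W} (hij : gi ≠ gj)
    (w : (corona G H).Walk (Sum.inl gi) (Sum.inr (gj, hk)))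
    (hw1 : ∀ z ∈ w.support, (corona G H).Adj (Sum.inl gi) z → z = w.getVert 1) (h : W) :
    Sum.inr (gi, h) ∉ w.support := by
  intro hmem
  have hs : (Sum.inr (gi, h) : V ⊕ V × W) = w.getVert 1 := hw1 _ hmem rfl
  have key : ∀ i, i ≤ w.length → w.getVert i = Sum.inl gi ∨ w.getVert i = Sum.inr (gi, h) := by
    intro i
    induction i with
    | zero => intro _; left; exact w.getVert_zero
    | succ n ih =>
      intro hn1
      have hadj := w.adj_getVert_succ (Nat.lt_of_succ_le hn1)
      have hmem' : w.getVert (n + 1) ∈ w.support :=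
        Walk.mem_support_iff_exists_getVert.mpr ⟨n + 1, rfl, hn1⟩
      rcases ih (Nat.le_of_succ_le hn1) with he | he
      · right; rw [hs]
        exact hw1 _ hmem' (by rw [he] at hadj; exact hadj)
      · rw [he] at hadj
        rcases hgv : w.getVert (n + 1) with g | q
        · rw [hgv] at hadj
          left
          exact congrArg Sum.inl (show gi = g from hadj).symm
        · rw [hgv] at hadj
          have h2 : (gi, h).1 = q.1 ∧ H.Adj h q.2 := hadj
          have h3 : Sum.inr q = w.getVert 1 := by
            refine hw1 _ (by rw [← hgv]; exact hmem') ?_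
            exact h2.1
          rw [← hs] at h3
          have hq : q = (gi, h) := Sum.inr.inj h3
          rw [hq] at h2
          exact absurd h2.2 H.irrefl
  have hfin := key w.length le_rfl
  rw [w.getVert_length] at hfin
  rcases hfin with h1 | h1
  · exact absurd h1 (by simp)
  · have h2 := Sum.inr.inj h1
    exact hij (congrArg Prod.fst h2).symm

end WTCorona


/-- In the corona product of finite connected non-complete graphs `G`, `H`,
for `g_i, g_j ∈ V(G)` and `h_k ∈ V(H)`, with `S = SWT_G(g_i,g_j)`: if `g_i = g_j` then
`WT_{G∘H}(g_i,(g_j,h_k)) = {g_i, (g_i,h_k)}`; and if `g_i ≠ g_j` then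
`WT_{G∘H}(g_i,(g_j,h_k)) = {g_i, g_j} ∪ (V(H^{g_j}) \ N_{H^{g_j}}(h_k)) ∪
⋃_{x ∈ S \ {g_i,g_j}} ({x} ∪ V(H^x))`. -/
theorem wtInterval_corona_mixed {V W : Type*} [Fintype V] [Fintype W]
    (G : SimpleGraph V) (H : SimpleGraph W)
    (hGc : G.Connected) (hHc : H.Connected)
    (hGnc : G ≠ ⊤) (hHnc : H ≠ ⊤)
    (gi gj : V) (hk : W) :
    (gi = gj →
      wtInterval (corona G H) (Sum.inl gi) (Sum.inr (gj, hk)) =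
        {Sum.inl gi, Sum.inr (gi, hk)}) ∧
    (gi ≠ gj →
      wtInterval (corona G H) (Sum.inl gi) (Sum.inr (gj, hk)) =
        ({Sum.inl gi, Sum.inl gj} : Set (V ⊕ V × W)) ∪
          {z : V ⊕ V × W | ∃ y : W, z = Sum.inr (gj, y) ∧ y ≠ hk ∧ ¬ H.Adj y hk} ∪
          {Sum.inr (gj, hk)} ∪
          {z : V ⊕ V × W | ∃ x ∈ swtInterval G gi gj, x ≠ gi ∧ x ≠ gj ∧
            (z = Sum.inl x ∨ ∃ h : W, z = Sum.inr (x, h))}) := by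
  classical
  constructor
  · rintro rfl
    have hadjuv : (corona G H).Adj (Sum.inl gi) (Sum.inr (gi, hk)) := rfl
    have hwt0 : IsWeaklyTollWalk (corona G H) (Walk.cons hadjuv Walk.nil) := by
      rw [isWTW_iff]
      constructor
      · intro z hz hadj
        rw [Walk.support_cons, Walk.support_nil, List.mem_cons, List.mem_singleton] at hz
        rcases hz with rfl | rfl
        · exact absurd hadj ((corona G H).irrefl)
        · rfl
      · intro z hz hadj
        rw [Walk.support_cons, Walk.support_nil, List.mem_cons, List.mem_singleton] at hz
        rcases hz with rfl | rfl
        · rfl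
        · exact absurd hadj ((corona G H).irrefl)
    ext z
    simp only [Set.mem_insert_iff, Set.mem_singleton_iff]
    constructor
    · rintro ⟨w, hw, hz⟩
      rw [isWTW_iff] at hw
      obtain ⟨hw1, hw2⟩ := hw
      have hs : (Sum.inr (gi, hk) : V ⊕ V × W) = w.getVert 1 :=
        hw1 _ w.end_mem_support hadjuv
      have he : (Sum.inl gi : V ⊕ V × W) = w.getVert (w.length - 1) :=
        hw2 _ w.start_mem_support hadjuv
      have key : ∀ i, i ≤ w.length →
          w.getVert i = Sum.inl gi ∨ w.getVert i = Sum.inr (gi, hk) := by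
        intro i
        induction i with
        | zero => intro _; left; exact w.getVert_zero
        | succ n ih =>
          intro hn1
          have hadj := w.adj_getVert_succ (Nat.lt_of_succ_le hn1)
          have hmem' : w.getVert (n + 1) ∈ w.support :=
            Walk.mem_support_iff_exists_getVert.mpr ⟨n + 1, rfl, hn1⟩
          rcases ih (Nat.le_of_succ_le hn1) with he' | he'
          · right
            refine (hw1 _ hmem' (by rw [he'] at hadj; exact hadj)).trans hs.symm
          · left
            refine (hw2 _ hmem' ?_).trans he.symm
            rw [he'] at hadj
            exact hadj.symm
      obtain ⟨n, hn, hnl⟩ := Walk.mem_support_iff_exists_getVert.mp hz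
      rcases key n hnl with h1 | h1
      · left; rw [← hn, h1]
      · right; rw [← hn, h1]
    · rintro (rfl | rfl)
      · exact ⟨_, hwt0, Walk.start_mem_support _⟩
      · exact ⟨_, hwt0, Walk.end_mem_support _⟩
  · intro hij
    ext z
    simp only [Set.mem_union, Set.mem_insert_iff, Set.mem_singleton_iff, Set.mem_setOf_eq]
    constructor
    · rintro ⟨w, hw, hz⟩
      rw [isWTW_iff] at hw
      obtain ⟨hw1, hw2⟩ := hw
      have hlen : 0 < w.length := by
        rcases Nat.eq_zero_or_pos w.length with h0 | h0
        · exact absurd (Walk.eq_of_length_eq_zero h0) (by simp)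
        · exact h0
      have hgjmem : Sum.inl gj ∈ w.support := by
        rcases WTCorona.mem_inl_of_mem_inr G H w w.end_mem_support with hm | ⟨h0, he⟩
        · exact hm
        · exact absurd he (by simp)
      have F3 : w.getVert (w.length - 1) = Sum.inl gj :=
        (hw2 _ hgjmem rfl).symm
      have hPswt : ∀ y ∈ (WTCorona.projWalk G H w).support, G.Adj gi y →
          y = (WTCorona.projWalk G H w).getVert 1 := by
        intro y hy hady
        obtain ⟨zz, hzz, hzy⟩ := WTCorona.projWalk_support_subset G H w y hy
        have hsy : Sum.inl y = w.getVert 1 := by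
          rcases zz with g | ⟨x0, h0⟩
          · have hg : g = y := hzy
            subst hg
            exact hw1 _ hzz hady
          · have hq : x0 = y := hzy
            subst hq
            have hmx : Sum.inl x0 ∈ w.support := by
              rcases WTCorona.mem_inl_of_mem_inr G H w hzz with hm | ⟨h1, he⟩
              · exact hm
              · exact absurd he (by simp)
            exact hw1 _ hmx hady
        have hne : Sum.elim id Prod.fst (Sum.inl gi : V ⊕ V × W) ≠
            Sum.elim id Prod.fst (w.getVert 1) := by
          rw [← hsy]; exact hady.ne
        have hone := WTCorona.projWalk_getVert_one G H w hlen hne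
        rw [hone, ← hsy]
        rfl
      have hPswt' : IsSemiWeaklyTollWalk G (WTCorona.projWalk G H w) :=
        (isSWT_iff G _).mpr hPswt
      rcases z with g | ⟨x, h⟩
      · by_cases hgi : g = gi
        · subst hgi; exact Or.inl (Or.inl (Or.inl (Or.inl rfl)))
        by_cases hgj : g = gj
        · subst hgj; exact Or.inl (Or.inl (Or.inl (Or.inr rfl)))
        refine Or.inr ⟨g, ⟨WTCorona.projWalk G H w, hPswt', ?_⟩, hgi, hgj, Or.inl rfl⟩
        exact WTCorona.mem_projWalk_support G H w _ hz
      · by_cases hxi : x = gi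
        · subst hxi
          exact absurd hz (WTCorona.not_mem_inr_start G H hij w hw1 h)
        by_cases hxj : x = gj
        · subst hxj
          by_cases hh : h = hk
          · subst hh; exact Or.inl (Or.inr rfl)
          · refine Or.inl (Or.inl (Or.inr ⟨h, rfl, hh, ?_⟩))
            intro hadj
            have hcon := hw2 _ hz ⟨rfl, hadj⟩
            rw [F3] at hcon
            simp at hcon
        · refine Or.inr ⟨x, ⟨WTCorona.projWalk G H w, hPswt', ?_⟩, hxi, hxj, Or.inr ⟨h, rfl⟩⟩
          exact WTCorona.mem_projWalk_support G H w _ hz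
    · intro hz
      obtain ⟨Q0, hQ0⟩ := exists_swt_walk hGc gi gj
      have TAwt : ∀ (Q : G.Walk gi gj), IsSemiWeaklyTollWalk G Q →
          IsWeaklyTollWalk (corona G H)
            ((Q.map (WTCorona.ι G H)).append
              (Walk.cons (show (corona G H).Adj (Sum.inl gj) (Sum.inr (gj, hk)) from rfl)
                Walk.nil)) := by
        intro Q hQ
        refine WTCorona.wtw_lift G H hk hij Q hQ _ (by simp) (by rfl) ?_
        intro z hz'
        rw [Walk.support_cons, Walk.support_nil, List.mem_cons, List.mem_singleton] at hz'
        rcases hz' with rfl | rfl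
        · exact Or.inr (Or.inl rfl)
        · exact Or.inl rfl
      rcases hz with (((rfl | rfl) | ⟨y, rfl, hy1, hy2⟩) | rfl) | ⟨x, hxS, hxi, hxj, hzx⟩
      · exact ⟨_, TAwt Q0 hQ0, Walk.start_mem_support _⟩
      · refine ⟨_, TAwt Q0 hQ0, ?_⟩
        rw [Walk.mem_support_append_iff]
        left
        rw [Walk.support_map, List.mem_map]
        exact ⟨gj, Q0.end_mem_support, rfl⟩
      · refine ⟨(Q0.map (WTCorona.ι G H)).append
          (Walk.cons (show (corona G H).Adj (Sum.inl gj) (Sum.inr (gj, y)) from rfl)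
            (Walk.cons (show (corona G H).Adj (Sum.inr (gj, y)) (Sum.inl gj) from rfl)
              (Walk.cons (show (corona G H).Adj (Sum.inl gj) (Sum.inr (gj, hk)) from rfl)
                Walk.nil))), ?_, ?_⟩
        · refine WTCorona.wtw_lift G H hk hij Q0 hQ0 _ (by simp) (by rfl) ?_
          intro z hz'
          simp only [Walk.support_cons, Walk.support_nil, List.mem_cons,
            List.mem_singleton, List.not_mem_nil, or_false] at hz'
          rcases hz' with rfl | rfl | rfl | rfl
          · exact Or.inr (Or.inl rfl)
          · exact Or.inr (Or.inr ⟨y, rfl, hy2⟩)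
          · exact Or.inr (Or.inl rfl)
          · exact Or.inl rfl
        · rw [Walk.mem_support_append_iff]
          right
          simp
      · exact ⟨_, TAwt Q0 hQ0, Walk.end_mem_support _⟩
      · obtain ⟨Qx, hQx, hxQx⟩ := hxS
        rcases hzx with rfl | ⟨h, rfl⟩
        · refine ⟨_, TAwt Qx hQx, ?_⟩
          rw [Walk.mem_support_append_iff]
          left
          rw [Walk.support_map, List.mem_map]
          exact ⟨x, hxQx, rfl⟩
        · exact WTCorona.wtw_detour G H hk hij Qx hQx hxQx hxi hxj h
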